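/- For all real numbers a, b and all p ≥ 2, (|a|^{p-2} a − |b|^{p-2} b)(a − b) ≥ 2^{2−p} |a − b|^p. -/

import Mathlib

private lemma superadd_aux {x y q : ℝ} (hx : 0 ≤ x) (hy : 0 ≤ y) (hq : 1 ≤ q) :
    x ^ q + y ^ q ≤ (x + y) ^ q := by
  have h := NNReal.coe_le_coe.2 (NNReal.add_rpow_le_rpow_add ⟨x, hx⟩ ⟨y, hy⟩ hq)
  push_cast at h
  exact h

private lemma convex2_aux {x y q : ℝ} (hx : 0 ≤ x) (hy : 0 ≤ y) (hq : 1 ≤ q) :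
    ((x + y) / 2) ^ q ≤ (x ^ q + y ^ q) / 2 := by
  have h := NNReal.coe_le_coe.2
    (NNReal.rpow_arith_mean_le_arith_mean2_rpow (1/2) (1/2) ⟨x, hx⟩ ⟨y, hy⟩ (add_halves 1) hq)
  push_cast at h
  calc ((x + y) / 2) ^ q = (1/2 * x + 1/2 * y) ^ q := by ring_nf
    _ ≤ 1/2 * x ^ q + 1/2 * y ^ q := h
    _ = (x ^ q + y ^ q) / 2 := by ring

private lemma pow_aux {p : ℝ} (hp : 2 ≤ p) {x : ℝ} (hx : 0 ≤ x) :
    |x| ^ (p - 2) * x = x ^ (p - 1) := by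
  rcases hx.eq_or_lt with h | h
  · rw [← h, mul_zero, Real.zero_rpow (by intro hc; linarith [hc] : p - 1 ≠ 0)]
  · rw [abs_of_pos h, show p - 1 = (p - 2) + 1 by ring, Real.rpow_add_one h.ne']

private lemma alg_aux {p : ℝ} (hp : 2 ≤ p) {u : ℝ} (hu : 0 ≤ u) :
    2 * (u / 2) ^ (p - 1) * u = 2 ^ (2 - p) * u ^ p := by
  rcases hu.eq_or_lt with h | h
  · rw [← h]
    rw [mul_zero, Real.zero_rpow (by intro hc; linarith [hc] : p ≠ 0), mul_zero]
  · have h2 : (0:ℝ) < 2 := two_pos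
    have hp2 : (0:ℝ) < 2 ^ p := Real.rpow_pos_of_pos h2 p
    have e1 : u ^ (p - 1) * u = u ^ p := by
      rw [Real.rpow_sub h, Real.rpow_one]; field_simp
    have e2 : (2:ℝ) ^ (2 - p) = 4 / 2 ^ p := by
      rw [Real.rpow_sub h2]; norm_num
    have e3 : (2:ℝ) ^ (p - 1) = 2 ^ p / 2 := by
      rw [Real.rpow_sub h2, Real.rpow_one]
    rw [Real.div_rpow hu h2.le, e2, e3, ← e1]
    field_simp
    ring

private lemma key_aux (p : ℝ) (hp : 2 ≤ p) {a b : ℝ} (ha : 0 ≤ a) (hba : b ≤ a) :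
    (|a| ^ (p - 2) * a - |b| ^ (p - 2) * b) * (a - b) ≥ 2 ^ (2 - p) * |a - b| ^ p := by
  have hq : 1 ≤ p - 1 := by linarith
  have hu : 0 ≤ a - b := by linarith
  rw [abs_of_nonneg hu, pow_aux hp ha]
  rcases le_total 0 b with hb | hb
  · -- both nonnegative
    rw [pow_aux hp hb]
    have hu2 : 0 ≤ (a - b) / 2 := by linarith
    have step1 : b ^ (p-1) + ((a-b)/2) ^ (p-1) ≤ (b + (a-b)/2) ^ (p-1) :=
      superadd_aux hb hu2 hq
    have step2 : (b + (a-b)/2) ^ (p-1) + ((a-b)/2) ^ (p-1) ≤ a ^ (p-1) := by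
      have := superadd_aux (by linarith : (0:ℝ) ≤ b + (a-b)/2) hu2 hq
      have e : b + (a-b)/2 + (a-b)/2 = a := by ring
      rwa [e] at this
    have hkey : 2 * ((a-b)/2) ^ (p-1) ≤ a ^ (p-1) - b ^ (p-1) := by linarith
    calc 2 ^ (2 - p) * (a - b) ^ p = 2 * ((a-b)/2) ^ (p-1) * (a - b) := (alg_aux hp hu).symm
      _ ≤ (a ^ (p-1) - b ^ (p-1)) * (a - b) := mul_le_mul_of_nonneg_right hkey hu
  · -- b ≤ 0
    have hc : 0 ≤ -b := by linarith
    have hbv : |b| ^ (p - 2) * b = -((-b) ^ (p - 1)) := by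
      have := pow_aux hp hc
      rw [abs_neg] at this
      nlinarith [this]
    rw [hbv]
    have hconv := convex2_aux ha hc hq
    have e : (a + -b) / 2 = (a - b) / 2 := by ring
    rw [e] at hconv
    have hkey : 2 * ((a-b)/2) ^ (p-1) ≤ a ^ (p-1) + (-b) ^ (p-1) := by linarith
    calc 2 ^ (2 - p) * (a - b) ^ p = 2 * ((a-b)/2) ^ (p-1) * (a - b) := (alg_aux hp hu).symm
      _ ≤ (a ^ (p-1) + (-b) ^ (p-1)) * (a - b) := mul_le_mul_of_nonneg_right hkey hu
      _ = (a ^ (p-1) - -((-b) ^ (p-1))) * (a - b) := by ring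

/-- Uniform p-monotonicity: for all reals a, b and p ≥ 2,
`(|a|^(p-2) a − |b|^(p-2) b)(a − b) ≥ 2^(2−p) |a − b|^p`. -/
theorem uniform_p_monotonicity (a b p : ℝ) (hp : 2 ≤ p) :
    (|a| ^ (p - 2) * a - |b| ^ (p - 2) * b) * (a - b) ≥ 2 ^ (2 - p) * |a - b| ^ p := by
  rcases le_total b a with h | h
  · rcases le_total 0 a with ha | ha
    · exact key_aux p hp ha h
    · have hk := key_aux p hp (a := -b) (b := -a) (by linarith) (by linarith)
      simp only [abs_neg, show -b - -a = a - b by ring] at hk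
      have e : (|b| ^ (p-2) * (-b) - |a| ^ (p-2) * (-a)) * (a - b)
          = (|a| ^ (p-2) * a - |b| ^ (p-2) * b) * (a - b) := by ring
      rw [e] at hk
      exact hk
  · rcases le_total 0 b with hb | hb
    · have hk := key_aux p hp (a := b) (b := a) hb h
      rw [abs_sub_comm b a] at hk
      have e : (|b| ^ (p-2) * b - |a| ^ (p-2) * a) * (b - a)
          = (|a| ^ (p-2) * a - |b| ^ (p-2) * b) * (a - b) := by ring
      rw [e] at hk
      exact hk
    · have hk := key_aux p hp (a := -a) (b := -b) (by linarith) (by linarith)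
      simp only [abs_neg, show -a - -b = b - a by ring] at hk
      rw [abs_sub_comm b a] at hk
      have e : (|a| ^ (p-2) * (-a) - |b| ^ (p-2) * (-b)) * (b - a)
          = (|a| ^ (p-2) * a - |b| ^ (p-2) * b) * (a - b) := by ring
      rw [e] at hk
      exact hk
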